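/- arXiv:math/0607036 — 4 statements merged into one kernel-verified Lean document; each statement's English description precedes it below -/
import Mathlib

section
/- Given any subdistributions H₀, H₁, H₂ with H = H₀+H₁+H₂ a probability distribution on [0,∞], the distributions F₁^{II} and F₀₂^{II} obtained from the predictable hazard measures L₀₂⁻(dt) = H₀₂(dt)/H([t,∞]) and L₁⁻(dt) = H₁(dt)/(H((t,∞]) + H₁({t})) satisfy the factorization H((t,∞]) = F₁^{II}((t,∞]) F₀₂^{II}((t,∞]) for all t. -/
/-!
Both `H` and the law of `min X₁ X₀₂`, for independent `X₁ ∼ F₁^{II}` and `X₀₂ ∼ F₀₂^{II}` with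
ties counted as `02`-events, solve the Volterra equation `P(dx) = P([x, ∞]) Λ(dx)` for the same
measure `Λ(dx) = (1 - L₀₂⁻{x}) L₁⁻(dx) + L₀₂⁻(dx)`, and the survival function of that minimum is
`F₁^{II}((t, ∞]) F₀₂^{II}((t, ∞])`. The Volterra equation has at most one probability solution:
the discrepancy `D(x) = |P[0, x) - P'[0, x)|` satisfies `D(x) ≤ ∫_{[0, x)} D dΛ`, which forces
`D = 0` up to any `t` with `Λ([0, t]) < ∞` (Gronwall), while `Λ([0, t]) = ∞` only happens when
both survival functions vanish at `t`.
-/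

open MeasureTheory Set ENNReal Filter Topology

namespace ModelII

lemma measurable_measure_Ici (μ : Measure ℝ≥0∞) : Measurable fun x => μ (Ici x) :=
  Antitone.measurable fun _ _ h => measure_mono (Ici_subset_Ici.2 h)

lemma measurable_measure_Ioi (μ : Measure ℝ≥0∞) : Measurable fun x => μ (Ioi x) :=
  Antitone.measurable fun _ _ h => measure_mono (Ioi_subset_Ioi h)

lemma measure_Ici_eq_add (μ : Measure ℝ≥0∞) (x : ℝ≥0∞) : μ (Ici x) = μ {x} + μ (Ioi x) := by
  rw [← Ioi_union_left, measure_union (by simp) (measurableSet_singleton x), add_comm]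

lemma measurable_measure_singleton (μ : Measure ℝ≥0∞) [IsFiniteMeasure μ] :
    Measurable fun x => μ {x} := by
  have h : (fun x => μ {x}) = fun x => μ (Ici x) - μ (Ioi x) := by
    funext x
    rw [measure_Ici_eq_add, ENNReal.add_sub_cancel_right (measure_ne_top μ _)]
  rw [h]
  exact (measurable_measure_Ici μ).sub (measurable_measure_Ioi μ)

/-- The points above which `μ` has no mass form an upper set; it is `μ`-null because it is
covered by its infimum and countably many of its elements. -/
lemma ae_measure_Ici_ne_zero (μ : Measure ℝ≥0∞) : ∀ᵐ x ∂μ, μ (Ici x) ≠ 0 := by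
  rw [ae_iff]
  simp only [ne_eq, not_not]
  set A := {x | μ (Ici x) = 0}
  have hup : ∀ {x y}, x ∈ A → x ≤ y → y ∈ A := fun hx hxy =>
    measure_mono_null (Ici_subset_Ici.2 hxy) hx
  obtain ⟨D, hDc, hDd⟩ := TopologicalSpace.exists_countable_dense ℝ≥0∞
  have hcover : A ⊆ ({sInf A} ∩ A) ∪ ⋃ q ∈ D ∩ A, Ici q := by
    intro x hx
    rcases (sInf_le hx).eq_or_lt with h | h
    · exact Or.inl ⟨h.symm, hx⟩
    · obtain ⟨q, hqD, hq⟩ := hDd.exists_between h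
      obtain ⟨y, hyA, hyq⟩ := sInf_lt_iff.1 hq.1
      exact Or.inr (mem_biUnion ⟨hqD, hup hyA hyq.le⟩ hq.2.le)
  refine measure_mono_null hcover (measure_union_null ?_ ?_)
  · by_cases h : sInf A ∈ A
    · exact measure_mono_null (inter_subset_left.trans (singleton_subset_iff.2 self_mem_Ici)) h
    · rw [singleton_inter_eq_empty.2 h, measure_empty]
  · exact (measure_biUnion_null_iff (hDc.mono inter_subset_left)).2 fun q hq => hq.2

lemma withDensity_singleton (μ : Measure ℝ≥0∞) (f : ℝ≥0∞ → ℝ≥0∞) (x : ℝ≥0∞) :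
    μ.withDensity f {x} = f x * μ {x} := by
  rw [withDensity_apply _ (measurableSet_singleton x), lintegral_singleton]

lemma measurable_withDensity_singleton (μ : Measure ℝ≥0∞) [IsFiniteMeasure μ]
    {f : ℝ≥0∞ → ℝ≥0∞} (hf : Measurable f) : Measurable fun x => μ.withDensity f {x} := by
  simp_rw [withDensity_singleton]
  exact hf.mul (measurable_measure_singleton μ)

lemma withDensity_inv_withDensity {α : Type*} [MeasurableSpace α] {μ : Measure α}
    {f : α → ℝ≥0∞} (hf : Measurable f) (hf_ne_zero : ∀ᵐ x ∂μ, f x ≠ 0)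
    (hf_ne_top : ∀ᵐ x ∂μ, f x ≠ ∞) : (μ.withDensity fun x => (f x)⁻¹).withDensity f = μ := by
  have h := withDensity_inv_same (μ := μ) hf.inv (by simpa using hf_ne_top)
    (by simpa using hf_ne_zero)
  simp only [Pi.inv_apply, inv_inv] at h
  exact h

lemma one_sub_inv_mul_mul_self {a b : ℝ≥0∞} (hb : b ≤ a) (ha : a ≠ ∞) :
    (1 - a⁻¹ * b) * a = a - b := by
  rcases eq_or_ne a 0 with rfl | ha₀
  · simp [nonpos_iff_eq_zero.1 hb]
  rw [ENNReal.sub_mul fun _ _ => ha, one_mul, mul_right_comm,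
    ENNReal.inv_mul_cancel ha₀ ha, one_mul]

lemma exists_measure_Ioc_lt {Λ : Measure ℝ≥0∞} {a b : ℝ≥0∞} (hab : a < b)
    (hΛ : Λ (Ioc a b) ≠ ∞) {ε : ℝ≥0∞} (hε : 0 < ε) : ∃ c ∈ Ioc a b, Λ (Ioc a c) < ε := by
  have hempty : ⋂ c > a, Ioc a c = ∅ := by
    refine eq_empty_of_forall_notMem fun y hy => ?_
    have hay : a < y := (mem_iInter₂.1 hy b hab).1
    obtain ⟨c, hac, hcy⟩ := exists_between hay
    exact hcy.not_ge (mem_iInter₂.1 hy c hac).2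
  have hlim : Tendsto (fun c => Λ (Ioc a c)) (𝓝[>] a) (𝓝 0) := by
    have := tendsto_measure_biInter_gt (μ := Λ) (s := fun c => Ioc a c)
      (fun _ _ => measurableSet_Ioc.nullMeasurableSet)
      (fun _ _ _ hij => Ioc_subset_Ioc_right hij) ⟨b, hab, hΛ⟩
    rwa [hempty, measure_empty] at this
  have : (𝓝[>] a).NeBot := nhdsGT_neBot_of_exists_gt ⟨b, hab⟩
  obtain ⟨c, hc, hcb⟩ := ((hlim.eventually (gt_mem_nhds hε)).and (Ioc_mem_nhdsGT hab)).exists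
  exact ⟨c, hcb, hc⟩

/-- Let `T` be the first point where `h` does not vanish: `h T` is an integral over `Iio T`, hence
zero, and just right of `T` the mass of `Λ` is `< 1`, so the supremum `r` of `h` there satisfies
`r ≤ r * Λ (Ioc T s)`, forcing `r = 0`. -/
lemma eq_zero_of_le_lintegral_Iio {Λ : Measure ℝ≥0∞} {h : ℝ≥0∞ → ℝ≥0∞} {t C : ℝ≥0∞}
    (hΛ : Λ (Iic t) ≠ ∞) (hC : C ≠ ∞) (hbdd : ∀ x ≤ t, h x ≤ C)
    (hh : ∀ x ≤ t, h x ≤ ∫⁻ y in Iio x, h y ∂Λ) {x : ℝ≥0∞} (hx : x ≤ t) : h x = 0 := by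
  by_contra hx₀
  set S := {x | x ≤ t ∧ h x ≠ 0}
  set T := sInf S
  have hxS : x ∈ S := ⟨hx, hx₀⟩
  have hTt : T ≤ t := (sInf_le hxS).trans hx
  have hbelow : ∀ y < T, h y = 0 := fun y hy => by
    by_contra hy₀
    exact hy.not_ge (sInf_le ⟨(hy.trans_le hTt).le, hy₀⟩)
  have hT : h T = 0 := by
    refine le_antisymm ((hh T hTt).trans_eq ?_) zero_le
    rw [setLIntegral_congr_fun measurableSet_Iio fun y hy => hbelow y hy, lintegral_zero]
  have hTx : T < x := (sInf_le hxS).lt_of_ne fun h => hx₀ (h ▸ hT)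
  obtain ⟨s, hs, hsmall⟩ := exists_measure_Ioc_lt hTx
    (measure_ne_top_of_subset (Ioc_subset_Iic_self.trans (Iic_subset_Iic.2 hx)) hΛ) one_pos
  set r := ⨆ y ∈ Iic s, h y
  have hst : s ≤ t := hs.2.trans hx
  have hr : r ≤ r * Λ (Ioc T s) := by
    refine iSup₂_le fun y hy => (hh y (le_trans hy hst)).trans ?_
    calc ∫⁻ z in Iio y, h z ∂Λ ≤ ∫⁻ z in Iio y, (Ioc T s).indicator (fun _ => r) z ∂Λ := by
          refine setLIntegral_mono' measurableSet_Iio fun z hz => ?_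
          rcases le_or_gt z T with hzT | hzT
          · rw [hzT.lt_or_eq.elim (hbelow z) (· ▸ hT)]
            exact zero_le
          · have hzs : z ∈ Ioc T s := ⟨hzT, (hz.out.trans_le hy).le⟩
            rw [indicator_of_mem hzs]
            exact le_biSup h hzs.2
      _ ≤ ∫⁻ z, (Ioc T s).indicator (fun _ => r) z ∂Λ := setLIntegral_le_lintegral _ _
      _ = r * Λ (Ioc T s) := lintegral_indicator_const measurableSet_Ioc r
  have hr₀ : r = 0 := by
    by_contra hr₀
    have hrtop : r ≠ ∞ := ne_top_of_le_ne_top hC (iSup₂_le fun y hy => hbdd y (le_trans hy hst))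
    exact hr.not_gt (by simpa [mul_comm] using ENNReal.mul_lt_mul_left hr₀ hrtop hsmall)
  obtain ⟨y, hyS, hys⟩ := sInf_lt_iff.1 hs.1
  exact hyS.2 (le_antisymm (hr₀ ▸ le_biSup h (show y ∈ Iic s from hys.le)) zero_le)

lemma measure_Iic_ne_top_of_withDensity_measure_Ici_eq {Λ P : Measure ℝ≥0∞} [IsFiniteMeasure P]
    (hP : Λ.withDensity (fun x => P (Ici x)) = P) {t : ℝ≥0∞} (ht : P (Ioi t) ≠ 0) :
    Λ (Iic t) ≠ ∞ := by
  have hle : P (Ioi t) * Λ (Iic t) ≤ P (Iic t) := calc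
    P (Ioi t) * Λ (Iic t) = ∫⁻ _ in Iic t, P (Ioi t) ∂Λ := (setLIntegral_const _ _).symm
    _ ≤ ∫⁻ x in Iic t, P (Ici x) ∂Λ := setLIntegral_mono (measurable_measure_Ici P)
      fun _ hx => measure_mono (Ioi_subset_Ici hx)
    _ = P (Iic t) := by rw [← withDensity_apply _ measurableSet_Iic, hP]
  exact fun htop => measure_ne_top P _ (top_le_iff.1 (ENNReal.mul_top ht ▸ htop ▸ hle))

theorem eq_of_withDensity_measure_Ici_eq {Λ P P' : Measure ℝ≥0∞} [IsProbabilityMeasure P]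
    [IsProbabilityMeasure P'] (hP : Λ.withDensity (fun x => P (Ici x)) = P)
    (hP' : Λ.withDensity (fun x => P' (Ici x)) = P') : P = P' := by
  set D : Set ℝ≥0∞ → ℝ≥0∞ := fun B => (P B - P' B) + (P' B - P B)
  have hsub : ∀ {μ ν : Measure ℝ≥0∞}, Λ.withDensity (fun x => μ (Ici x)) = μ →
      Λ.withDensity (fun x => ν (Ici x)) = ν → ∀ B, MeasurableSet B →
      μ B - ν B ≤ ∫⁻ x in B, (μ (Ici x) - ν (Ici x)) ∂Λ := by
    intro μ ν hμ hν B hB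
    conv_lhs => rw [← hμ, ← hν, withDensity_apply _ hB, withDensity_apply _ hB]
    exact lintegral_sub_le _ _ (measurable_measure_Ici ν)
  have hD : ∀ B, MeasurableSet B → D B ≤ ∫⁻ x in B, D (Ici x) ∂Λ := fun B hB => calc
    D B ≤ (∫⁻ x in B, (P (Ici x) - P' (Ici x)) ∂Λ) + ∫⁻ x in B, (P' (Ici x) - P (Ici x)) ∂Λ :=
      add_le_add (hsub hP hP' B hB) (hsub hP' hP B hB)
    _ = ∫⁻ x in B, D (Ici x) ∂Λ := (lintegral_add_left (f := fun x => P (Ici x) - P' (Ici x))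
      ((measurable_measure_Ici P).sub (measurable_measure_Ici P')) _).symm
  have hIci : ∀ x, D (Ici x) = D (Iio x) := fun x => by
    simp only [D, ← compl_Iio, prob_compl_eq_one_sub measurableSet_Iio,
      ENNReal.sub_sub_sub_cancel_left one_ne_top prob_le_one, add_comm]
  refine Measure.ext_of_Iic P P' fun t => ?_
  by_cases hsurv : P (Ioi t) = 0 ∧ P' (Ioi t) = 0
  · rw [← compl_Ioi, prob_compl_eq_one_sub measurableSet_Ioi,
      prob_compl_eq_one_sub measurableSet_Ioi, hsurv.1, hsurv.2]
  have hΛ : Λ (Iic t) ≠ ∞ := (not_and_or.1 hsurv).elim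
    (measure_Iic_ne_top_of_withDensity_measure_Ici_eq hP)
    (measure_Iic_ne_top_of_withDensity_measure_Ici_eq hP')
  have hzero : ∀ x ≤ t, D (Iio x) = 0 := fun x hx => by
    refine eq_zero_of_le_lintegral_Iio (h := fun x => D (Iio x)) (C := 2) hΛ (by norm_num)
      (fun y _ => ?_) (fun y _ => ?_) hx
    · calc D (Iio y) ≤ 1 + 1 := add_le_add (tsub_le_self.trans prob_le_one)
            (tsub_le_self.trans prob_le_one)
        _ = 2 := one_add_one_eq_two
    · simpa only [hIci] using hD (Iio y) measurableSet_Iio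
  have hDt : D (Iic t) = 0 := by
    refine le_antisymm ((hD _ measurableSet_Iic).trans_eq ?_) zero_le
    rw [setLIntegral_congr_fun measurableSet_Iic fun y hy => (hIci y).trans (hzero y hy),
      lintegral_zero]
  obtain ⟨h₁, h₂⟩ := add_eq_zero.1 hDt
  exact le_antisymm (tsub_eq_zero_iff_le.1 h₁) (tsub_eq_zero_iff_le.1 h₂)

noncomputable def hazard (μ : Measure ℝ≥0∞) : Measure ℝ≥0∞ :=
  μ.withDensity fun x => (μ (Ici x))⁻¹

lemma withDensity_hazard (μ : Measure ℝ≥0∞) [IsFiniteMeasure μ] :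
    (hazard μ).withDensity (fun x => μ (Ici x)) = μ :=
  withDensity_inv_withDensity (measurable_measure_Ici μ) (ae_measure_Ici_ne_zero μ)
    (ae_of_all _ fun _ => measure_ne_top _ _)

lemma measurable_hazard_singleton (μ : Measure ℝ≥0∞) [IsFiniteMeasure μ] :
    Measurable fun x => hazard μ {x} :=
  measurable_withDensity_singleton μ (measurable_measure_Ici μ).inv

lemma one_sub_hazard_singleton_mul (μ : Measure ℝ≥0∞) [IsFiniteMeasure μ] (x : ℝ≥0∞) :
    (1 - hazard μ {x}) * μ (Ici x) = μ (Ioi x) := by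
  rw [hazard, withDensity_singleton,
    one_sub_inv_mul_mul_self (measure_mono (singleton_subset_iff.2 self_mem_Ici))
      (measure_ne_top _ _),
    measure_Ici_eq_add, ENNReal.add_sub_cancel_left (measure_ne_top _ _)]

/-- The hazard measure of `min X₁ X₂` for independent `X₁, X₂` with hazard measures `Λ₁, Λ₂`,
ties being counted as `X₂`-events: its atoms satisfy `1 - ΔΛ = (1 - ΔΛ₁) (1 - ΔΛ₂)`. -/
noncomputable def minHazard (Λ₁ Λ₂ : Measure ℝ≥0∞) : Measure ℝ≥0∞ :=
  Λ₁.withDensity (fun x => 1 - Λ₂ {x}) + Λ₂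

lemma withDensity_minHazard {Λ₁ Λ₂ : Measure ℝ≥0∞} (hΛ₂ : Measurable fun x => Λ₂ {x})
    {g : ℝ≥0∞ → ℝ≥0∞} (hg : Measurable g) :
    (minHazard Λ₁ Λ₂).withDensity g
      = Λ₁.withDensity (fun x => (1 - Λ₂ {x}) * g x) + Λ₂.withDensity g := by
  have hf : Measurable fun x => 1 - Λ₂ {x} := measurable_const.sub hΛ₂
  rw [minHazard, withDensity_add_measure, ← withDensity_mul _ hf hg]
  rfl

noncomputable def minLaw (μ ν : Measure ℝ≥0∞) : Measure ℝ≥0∞ :=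
  (μ.prod ν).map fun p => min p.1 p.2

instance (μ ν : Measure ℝ≥0∞) [IsProbabilityMeasure μ] [IsProbabilityMeasure ν] :
    IsProbabilityMeasure (minLaw μ ν) :=
  Measure.isProbabilityMeasure_map (measurable_fst.min measurable_snd).aemeasurable

lemma minLaw_Ioi (μ ν : Measure ℝ≥0∞) [SFinite ν] (t : ℝ≥0∞) :
    minLaw μ ν (Ioi t) = μ (Ioi t) * ν (Ioi t) := by
  rw [minLaw, Measure.map_apply (measurable_fst.min measurable_snd) measurableSet_Ioi,
    ← Measure.prod_prod]
  congr 1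
  ext p
  simp

lemma minLaw_Ici (μ ν : Measure ℝ≥0∞) [SFinite ν] (t : ℝ≥0∞) :
    minLaw μ ν (Ici t) = μ (Ici t) * ν (Ici t) := by
  rw [minLaw, Measure.map_apply (measurable_fst.min measurable_snd) measurableSet_Ici,
    ← Measure.prod_prod]
  congr 1
  ext p
  simp [Prod.le_def]

lemma minLaw_eq (μ ν : Measure ℝ≥0∞) [SFinite μ] [SFinite ν] :
    minLaw μ ν = μ.withDensity (fun x => ν (Ioi x)) + ν.withDensity (fun x => μ (Ici x)) := by
  ext B hB
  have hsplit : (fun p : ℝ≥0∞ × ℝ≥0∞ => min p.1 p.2) ⁻¹' B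
      = {p | p.1 ∈ B ∧ p.1 < p.2} ∪ {p | p.2 ∈ B ∧ p.2 ≤ p.1} := by
    ext p
    rcases lt_or_ge p.1 p.2 with h | h
    · simp [h, min_eq_left h.le, h.not_ge]
    · simp [h, not_lt.2 h]
  have hm₁ : MeasurableSet {p : ℝ≥0∞ × ℝ≥0∞ | p.1 ∈ B ∧ p.1 < p.2} :=
    (measurable_fst hB).inter (measurableSet_lt measurable_fst measurable_snd)
  have hm₂ : MeasurableSet {p : ℝ≥0∞ × ℝ≥0∞ | p.2 ∈ B ∧ p.2 ≤ p.1} :=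
    (measurable_snd hB).inter (measurableSet_le measurable_snd measurable_fst)
  rw [minLaw, Measure.map_apply (measurable_fst.min measurable_snd) hB, hsplit,
    measure_union (disjoint_left.2 fun p h₁ h₂ => h₁.2.not_ge h₂.2) hm₂,
    Measure.prod_apply hm₁, Measure.prod_apply_symm hm₂, Measure.add_apply,
    withDensity_apply _ hB, withDensity_apply _ hB,
    ← lintegral_indicator hB, ← lintegral_indicator hB]
  congr 1 <;> refine lintegral_congr fun x => ?_ <;> by_cases hx : x ∈ B <;> simp [hx, Ioi, Ici]

lemma withDensity_minHazard_hazard_minLaw (μ ν : Measure ℝ≥0∞) [IsFiniteMeasure μ]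
    [IsFiniteMeasure ν] :
    (minHazard (hazard μ) (hazard ν)).withDensity (fun x => minLaw μ ν (Ici x)) = minLaw μ ν := by
  have hμ := measurable_measure_Ici μ
  have hν := measurable_measure_Ici ν
  simp_rw [minLaw_Ici]
  rw [withDensity_minHazard (g := fun x => μ (Ici x) * ν (Ici x)) (measurable_hazard_singleton ν)
    (hμ.mul hν), minLaw_eq]
  congr 1
  · calc (hazard μ).withDensity (fun x => (1 - hazard ν {x}) * (μ (Ici x) * ν (Ici x)))
        = (hazard μ).withDensity ((fun x => μ (Ici x)) * fun x => ν (Ioi x)) := by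
          congr 1
          funext x
          rw [Pi.mul_apply, ← one_sub_hazard_singleton_mul ν x]
          ring
      _ = μ.withDensity (fun x => ν (Ioi x)) := by
          rw [withDensity_mul _ hμ (measurable_measure_Ioi ν), withDensity_hazard]
  · calc (hazard ν).withDensity (fun x => μ (Ici x) * ν (Ici x))
        = (hazard ν).withDensity ((fun x => ν (Ici x)) * fun x => μ (Ici x)) := by
          simp_rw [mul_comm (μ (Ici _))]
          rfl
      _ = ν.withDensity (fun x => μ (Ici x)) := by
          rw [withDensity_mul _ hν hμ, withDensity_hazard]

lemma withDensity_minHazard_of_add_eq {H H₁ Q : Measure ℝ≥0∞} [IsFiniteMeasure H]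
    (hH : H₁ + Q = H) :
    (minHazard (H₁.withDensity fun x => (H (Ioi x) + H₁ {x})⁻¹)
        (Q.withDensity fun x => (H (Ici x))⁻¹)).withDensity (fun x => H (Ici x)) = H := by
  have hH₁ : ∀ B, H₁ B ≤ H B := fun B => hH ▸ Measure.le_add_right le_rfl B
  have hQ : ∀ B, Q B ≤ H B := fun B => hH ▸ Measure.le_add_left le_rfl B
  have : IsFiniteMeasure H₁ := ⟨(hH₁ univ).trans_lt (measure_lt_top H univ)⟩
  have : IsFiniteMeasure Q := ⟨(hQ univ).trans_lt (measure_lt_top H univ)⟩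
  have hmH := measurable_measure_Ici H
  have hden : ∀ x, (1 - (Q.withDensity fun x => (H (Ici x))⁻¹) {x}) * H (Ici x)
      = H (Ioi x) + H₁ {x} := by
    intro x
    have hsingle : H {x} = H₁ {x} + Q {x} := by rw [← hH, Measure.add_apply]
    rw [withDensity_singleton, one_sub_inv_mul_mul_self
        ((hQ _).trans (measure_mono (singleton_subset_iff.2 self_mem_Ici))) (measure_ne_top _ _),
      measure_Ici_eq_add, hsingle, add_right_comm, add_comm (H₁ {x}),
      ENNReal.add_sub_cancel_right (measure_ne_top _ _)]
  have hden_ne_zero : ∀ᵐ x ∂H₁, H (Ioi x) + H₁ {x} ≠ 0 := by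
    filter_upwards [ae_measure_Ici_ne_zero H₁] with x hx
    refine fun h => hx (le_antisymm ?_ zero_le)
    rw [← h, measure_Ici_eq_add, add_comm]
    exact add_le_add (hH₁ _) le_rfl
  have hIci_ne_zero : ∀ᵐ x ∂Q, H (Ici x) ≠ 0 := by
    filter_upwards [ae_measure_Ici_ne_zero Q] with x hx
    exact fun h => hx (le_antisymm (h ▸ hQ _) zero_le)
  rw [withDensity_minHazard
    (measurable_withDensity_singleton Q (f := fun x => (H (Ici x))⁻¹) hmH.inv) hmH]
  simp_rw [hden]
  rw [withDensity_inv_withDensity (f := fun x => H (Ioi x) + H₁ {x})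
      ((measurable_measure_Ioi H).add (measurable_measure_singleton H₁))
      hden_ne_zero (ae_of_all _ fun _ => by finiteness),
    withDensity_inv_withDensity hmH hIci_ne_zero (ae_of_all _ fun _ => measure_ne_top _ _), hH]

end ModelII

open ModelII in
/-- for any subdistributions `H₀, H₁, H₂` summing to a probability `H` on
`[0,∞]`, the distributions `F₀₂^{II}` and `F₁^{II}` associated with the predictable
hazard measures `L₀₂⁻(dt) = H₀₂(dt)/H([t,∞])` and
`L₁⁻(dt) = H₁(dt)/(H((t,∞]) + H₁({t}))` satisfy
`H((t,∞]) = F₁^{II}((t,∞]) F₀₂^{II}((t,∞])` for all `t`. -/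
theorem modelII_factorization (H0 H1 H2 : Measure ℝ≥0∞)
    [IsProbabilityMeasure (H0 + H1 + H2)]
    (F02 F1 : Measure ℝ≥0∞) [IsProbabilityMeasure F02] [IsProbabilityMeasure F1]
    (hF02 : ∀ B, MeasurableSet B →
      ∫⁻ s in B, (F02 (Ici s))⁻¹ ∂F02 = ∫⁻ s in B, ((H0 + H1 + H2) (Ici s))⁻¹ ∂(H0 + H2))
    (hF1 : ∀ B, MeasurableSet B →
      ∫⁻ s in B, (F1 (Ici s))⁻¹ ∂F1
        = ∫⁻ s in B, ((H0 + H1 + H2) (Ioi s) + H1 {s})⁻¹ ∂H1) :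
    ∀ t, (H0 + H1 + H2) (Ioi t) = F1 (Ioi t) * F02 (Ioi t) := by
  intro t
  have hL02 : (H0 + H2).withDensity (fun s => ((H0 + H1 + H2) (Ici s))⁻¹) = hazard F02 :=
    Measure.ext fun B hB => by
      rw [hazard, withDensity_apply _ hB, withDensity_apply _ hB, hF02 B hB]
  have hL1 : H1.withDensity (fun s => ((H0 + H1 + H2) (Ioi s) + H1 {s})⁻¹) = hazard F1 :=
    Measure.ext fun B hB => by
      rw [hazard, withDensity_apply _ hB, withDensity_apply _ hB, hF1 B hB]
  have hH := withDensity_minHazard_of_add_eq (H := H0 + H1 + H2) (H₁ := H1) (Q := H0 + H2)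
    (by abel)
  rw [hL1, hL02] at hH
  rw [← minLaw_Ioi,
    eq_of_withDensity_measure_Ici_eq hH (withDensity_minHazard_hazard_minLaw F1 F02)]
end

section
/- Under Turnbull's doubly censored model, the predictable reverse hazard measure M₂⁻(dt) = H₂(dt)/H([0,t]) satisfies M₂⁻(dt) = [F_L([0,t]) F_T([0,t]) / (F_L([0,t]) F_T([0,t]) + F_R([0,t]) F_T((t,∞]))] · M_L⁻(dt), where M_L⁻(dt) = F_L(dt)/F_L([0,t]); in particular M₂⁻ ≤ M_L⁻ as measures, and consequently F₂^I([0,t]) ≥ F_L([0,t]) for all t ≥ 0. -/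
/-!
Since `H₂ = F_T([0,t]) · F_L` and `H([0,t]) = F_L F_T + F_R F_T((t,∞])`, the density of `M₂⁻`
with respect to `F_L` is `F_T([0,t]) / H([0,t])`, which is the stated factor times
`1 / F_L([0,t])`; the factor is at most `1`, whence `M₂⁻ ≤ M_L⁻`.

For the last claim write `G = F₂^I([0,·])` and `K = F_L([0,·])`. On `(s, b]` one has `dG = G dM₂⁻`
and `dK = K dM_L⁻ ≥ K dM₂⁻`, so `D = K · G(b) - G · K(b)` satisfies a backward Volterra relation
driven by `M₂⁻`. On an interval whose interior has `M₂⁻`-mass `ε < 1` this relation is a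
contraction and forces `D ≤ 0`, i.e. `K / G` is nondecreasing there. Continuous induction spreads
this to `[t, ∞]` when `K(t) > 0`, and `K(∞) = G(∞) = 1` gives `K(t) ≤ G(t)`.
-/

open MeasureTheory Set ENNReal Filter Topology

theorem setIntegral_le_measureReal_mul {α : Type*} [MeasurableSpace α] {μ : Measure α}
    {f : α → ℝ} {s : Set α} {c : ℝ}
    (hs : MeasurableSet s) (hμs : μ s ≠ ∞) (hf : IntegrableOn f s μ) (hfc : ∀ x ∈ s, f x ≤ c) :
    ∫ x in s, f x ∂μ ≤ μ.real s * c := by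
  calc ∫ x in s, f x ∂μ ≤ ∫ _ in s, c ∂μ := setIntegral_mono_on hf (integrableOn_const hμs) hs hfc
    _ = μ.real s * c := by rw [setIntegral_const, smul_eq_mul]

section Volterra

variable {α : Type*} [LinearOrder α] [TopologicalSpace α] [OrderClosedTopology α]
  [MeasurableSpace α] [OpensMeasurableSpace α]

/- Write the hypothesis as `D s = -∫_{(s,b)} D - β s` with `β = -Φ` nonnegative and antitone.
Substituting it into itself once gives `D ≤ ε² · max (sup D) 0`, where `ε < 1` is the mass of
`(l, b)`. -/
theorem nonpos_of_monotoneOn_add_setIntegral_Ioo {μ : Measure α} {D : α → ℝ} {l b : α}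
    (hμ : μ (Ioo l b) < 1) (hD : IntegrableOn D (Ioo l b) μ) (hbdd : BddAbove (D '' Icc l b))
    (hDb : D b ≤ 0) (hmono : MonotoneOn (fun s => D s + ∫ x in Ioo s b, D x ∂μ) (Icc l b)) :
    ∀ s ∈ Icc l b, D s ≤ 0 := by
  set Φ := fun s => D s + ∫ x in Ioo s b, D x ∂μ
  set ε := μ.real (Ioo l b)
  have hε0 : 0 ≤ ε := measureReal_nonneg
  have hε1 : ε < 1 := by
    simpa [ε, measureReal_def] using ENNReal.toReal_strict_mono one_ne_top hμ
  set M := max (sSup (D '' Icc l b)) 0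
  have hM0 : 0 ≤ M := le_max_right _ _
  have hDM : ∀ x ∈ Icc l b, D x ≤ M := fun x hx =>
    (le_csSup hbdd (mem_image_of_mem D hx)).trans (le_max_left _ _)
  have hΦ : ∀ s ∈ Icc l b, Φ s ≤ 0 := fun s hs => by
    have hΦb : Φ b = D b := by simp [Φ]
    exact (hmono hs ⟨hs.1.trans hs.2, le_rfl⟩ hs.2).trans (hΦb ▸ hDb)
  have hbound : ∀ s ∈ Icc l b, ∀ f : α → ℝ, IntegrableOn f (Ioo l b) μ → ∀ c, 0 ≤ c →
      (∀ x ∈ Ioo s b, f x ≤ c) → ∫ x in Ioo s b, f x ∂μ ≤ c * ε := by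
    intro s hs f hf c hc hfc
    have hsub : Ioo s b ⊆ Ioo l b := Ioo_subset_Ioo_left hs.1
    have hfin : μ (Ioo l b) ≠ ∞ := (hμ.trans one_lt_top).ne
    calc ∫ x in Ioo s b, f x ∂μ ≤ μ.real (Ioo s b) * c := setIntegral_le_measureReal_mul
          measurableSet_Ioo (ne_top_of_le_ne_top hfin (measure_mono hsub)) (hf.mono_set hsub) hfc
      _ ≤ c * ε := by rw [mul_comm]; exact mul_le_mul_of_nonneg_left (measureReal_mono hsub hfin) hc
  have hneg : ∀ x ∈ Icc l b, -D x ≤ M * ε - Φ x := fun x hx => by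
    have := hbound x hx D hD M hM0 fun y hy => hDM y ⟨hx.1.trans hy.1.le, hy.2.le⟩
    simp only [Φ]
    linarith
  have hsq : ∀ s ∈ Icc l b, D s ≤ M * ε * ε := fun s hs => by
    have hΦs := hΦ s hs
    have := hbound s hs (fun x => -D x) hD.neg (M * ε - Φ s) (by nlinarith) fun x hx => by
      have hx' : x ∈ Icc l b := ⟨hs.1.trans hx.1.le, hx.2.le⟩
      linarith [hneg x hx', hmono hs hx' hx.1.le]
    rw [integral_neg] at this
    simp only [Φ] at hΦs
    nlinarith
  have hM : M ≤ M * ε * ε := max_le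
    (Real.sSup_le (by rintro _ ⟨x, hx, rfl⟩; exact hsq x hx) (by positivity)) (by positivity)
  have hMnonpos : M ≤ 0 := by nlinarith [mul_le_mul_of_nonneg_left hε1.le hM0]
  exact fun s hs => (hDM s hs).trans hMnonpos

end Volterra

section IntervalMeasure

variable {α : Type*} [LinearOrder α] [TopologicalSpace α] [OrderTopology α]
  [FirstCountableTopology α] [MeasurableSpace α] [OpensMeasurableSpace α]

theorem eventually_measure_Ioo_lt_nhdsGT {μ : Measure α} {a c : α} (hac : a < c)
    (hfin : μ (Ioo a c) ≠ ∞) {ε : ℝ≥0∞} (hε : 0 < ε) : ∀ᶠ x in 𝓝[>] a, μ (Ioo a x) < ε := by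
  have hlim := tendsto_measure_biInter_gt (μ := μ) (s := fun r => Ioo a r)
    (fun _ _ => measurableSet_Ioo.nullMeasurableSet)
    (fun _ _ _ hij => Ioo_subset_Ioo_right hij) ⟨c, hac, hfin⟩
  have hempty : (⋂ r > a, Ioo a r) = ∅ :=
    eq_empty_of_forall_notMem fun x hx => (mem_iInter₂.1 hx x (mem_iInter₂.1 hx c hac).1).2.false
  rw [hempty, measure_empty] at hlim
  exact hlim.eventually_lt_const hε

theorem eventually_measure_Ioo_lt_nhdsLT {μ : Measure α} {a c : α} (hca : c < a)
    (hfin : μ (Ioo c a) ≠ ∞) {ε : ℝ≥0∞} (hε : 0 < ε) : ∀ᶠ x in 𝓝[<] a, μ (Ioo x a) < ε := by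
  have hlim := tendsto_measure_biInter_gt (ι := αᵒᵈ) (μ := μ) (a := OrderDual.toDual a)
    (s := fun r => Ioo (OrderDual.ofDual r) a)
    (fun _ _ => measurableSet_Ioo.nullMeasurableSet)
    (fun _ _ _ hij => Ioo_subset_Ioo_left hij) ⟨OrderDual.toDual c, hca, hfin⟩
  have hempty : (⋂ r > OrderDual.toDual a, Ioo (OrderDual.ofDual r) a) = ∅ :=
    eq_empty_of_forall_notMem fun x hx =>
      (mem_iInter₂.1 hx (OrderDual.toDual x) (mem_iInter₂.1 hx (OrderDual.toDual c) hca).2).1.false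
  rw [hempty, measure_empty] at hlim
  exact hlim.eventually_lt_const hε

end IntervalMeasure

section ReverseHazard

variable {α : Type*} [CompleteLinearOrder α] [TopologicalSpace α] [OrderTopology α]
  [MeasurableSpace α]

theorem ae_measure_Iic_ne_zero [FirstCountableTopology α] (μ : Measure α) :
    ∀ᵐ u ∂μ, μ (Iic u) ≠ 0 := by
  rw [ae_iff]
  simp only [ne_eq, not_not]
  set N := {u | μ (Iic u) = 0}
  rcases N.eq_empty_or_nonempty with hN | hN
  · simp [hN]
  by_cases hmax : sSup N ∈ N
  · exact measure_mono_null (fun u hu => le_sSup hu) hmax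
  obtain ⟨x, -, hx, hxN⟩ := exists_seq_tendsto_sSup hN (OrderTop.bddAbove N)
  have hlt : ∀ u ∈ N, u < sSup N := fun u hu => (le_sSup hu).lt_of_ne fun h => hmax (h ▸ hu)
  refine measure_mono_null (fun u hu => ?_) (measure_iUnion_null hxN)
  rw [iUnion_Iic_eq_Iio_of_lt_of_tendsto (fun n => hlt _ (hxN n)) hx]
  exact hlt u hu

variable [BorelSpace α]

theorem measurable_measure_Iic (μ : Measure α) : Measurable fun t => μ (Iic t) :=
  Monotone.measurable fun _ _ h => measure_mono (Iic_subset_Iic.2 h)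

noncomputable def reverseHazard (μ : Measure α) : Measure α :=
  μ.withDensity fun s => (μ (Iic s))⁻¹

theorem reverseHazard_Ioi_ne_top (μ : Measure α) [IsFiniteMeasure μ] {t : α}
    (ht : μ (Iic t) ≠ 0) : reverseHazard μ (Ioi t) ≠ ∞ := by
  rw [reverseHazard, withDensity_apply _ measurableSet_Ioi]
  refine ne_top_of_le_ne_top (b := ∫⁻ _ in Ioi t, (μ (Iic t))⁻¹ ∂μ) ?_
    (setLIntegral_mono measurable_const fun u hu => ?_)
  · rw [setLIntegral_const]
    exact ENNReal.mul_ne_top (ENNReal.inv_ne_top.2 ht) (measure_ne_top _ _)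
  · exact ENNReal.inv_le_inv.2 (measure_mono (Iic_subset_Iic.2 (le_of_lt hu)))

variable [FirstCountableTopology α]

theorem setLIntegral_measure_Iic_reverseHazard (μ : Measure α) [IsFiniteMeasure μ] {A : Set α}
    (hA : MeasurableSet A) : ∫⁻ u in A, μ (Iic u) ∂reverseHazard μ = μ A := by
  rw [reverseHazard, setLIntegral_withDensity_eq_setLIntegral_mul _ (f := fun s => (μ (Iic s))⁻¹)
    (measurable_measure_Iic μ).inv (measurable_measure_Iic μ) hA]
  calc _ = ∫⁻ _ in A, 1 ∂μ := setLIntegral_congr_fun_ae hA <|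
        (ae_measure_Iic_ne_zero μ).mono fun u hu _ => ENNReal.inv_mul_cancel hu (measure_ne_top μ _)
    _ = μ A := by simp

theorem integrable_measureReal_Iic_reverseHazard (μ : Measure α) [IsFiniteMeasure μ] :
    Integrable (fun u => μ.real (Iic u)) (reverseHazard μ) := by
  refine integrable_toReal_of_lintegral_ne_top (measurable_measure_Iic μ).aemeasurable ?_
  simpa using (setLIntegral_measure_Iic_reverseHazard μ MeasurableSet.univ).trans_lt
    (measure_lt_top μ univ) |>.ne

theorem setIntegral_measureReal_Iic_reverseHazard (μ : Measure α) [IsFiniteMeasure μ]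
    {A : Set α} (hA : MeasurableSet A) :
    ∫ u in A, μ.real (Iic u) ∂reverseHazard μ = μ.real A := by
  rw [measureReal_def, ← setLIntegral_measure_Iic_reverseHazard μ hA, ← integral_toReal
    (measurable_measure_Iic μ).aemeasurable (ae_of_all _ fun _ => measure_lt_top _ _)]
  rfl

theorem measureReal_Iic_add_setIntegral_Ioc (μ : Measure α) [IsFiniteMeasure μ] {s b : α}
    (hsb : s ≤ b) :
    μ.real (Iic s) + ∫ u in Ioc s b, μ.real (Iic u) ∂reverseHazard μ = μ.real (Iic b) := by
  rw [setIntegral_measureReal_Iic_reverseHazard μ measurableSet_Ioc, ← measureReal_union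
    (Iic_disjoint_Ioc le_rfl) measurableSet_Ioc, Iic_union_Ioc_eq_Iic hsb]

section Comparison

variable {μ ν : Measure α} [IsFiniteMeasure μ]

theorem monotoneOn_measureReal_Iic_add_setIntegral_Ioc (h : reverseHazard ν ≤ reverseHazard μ)
    (b : α) :
    MonotoneOn (fun s => μ.real (Iic s) + ∫ u in Ioc s b, μ.real (Iic u) ∂reverseHazard ν)
      (Iic b) := by
  intro s _ s' hs' hss'
  have hint := (integrable_measureReal_Iic_reverseHazard μ).mono_measure h
  have hsplit : ∫ u in Ioc s b, μ.real (Iic u) ∂reverseHazard ν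
      = ∫ u in Ioc s s', μ.real (Iic u) ∂reverseHazard ν
        + ∫ u in Ioc s' b, μ.real (Iic u) ∂reverseHazard ν := by
    rw [← Ioc_union_Ioc_eq_Ioc hss' hs', setIntegral_union (Ioc_disjoint_Ioc_of_le le_rfl)
      measurableSet_Ioc hint.integrableOn hint.integrableOn]
  have hle : ∫ u in Ioc s s', μ.real (Iic u) ∂reverseHazard ν
      ≤ ∫ u in Ioc s s', μ.real (Iic u) ∂reverseHazard μ :=
    integral_mono_measure (Measure.restrict_mono subset_rfl h)
      (ae_of_all _ fun _ => measureReal_nonneg)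
      (integrable_measureReal_Iic_reverseHazard μ).integrableOn
  have := measureReal_Iic_add_setIntegral_Ioc μ hss'
  dsimp only
  linarith

variable [IsFiniteMeasure ν]

theorem measureReal_Iic_mul_le_of_reverseHazard_Ioo_lt_one
    (h : reverseHazard ν ≤ reverseHazard μ) {l b : α} (hε : reverseHazard ν (Ioo l b) < 1) :
    ∀ s ∈ Icc l b, μ.real (Iic s) * ν.real (Iic b) ≤ ν.real (Iic s) * μ.real (Iic b) := by
  set K := fun u => μ.real (Iic u)
  set G := fun u => ν.real (Iic u)
  set D := fun s => K s * G b - G s * K b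
  have hK := (integrable_measureReal_Iic_reverseHazard μ).mono_measure h
  have hG := integrable_measureReal_Iic_reverseHazard ν
  have hDb : D b = 0 := by simp only [D]; ring
  have hΦ : ∀ s ∈ Icc l b, D s + ∫ x in Ioo s b, D x ∂reverseHazard ν
      = G b * (K s + ∫ u in Ioc s b, K u ∂reverseHazard ν) - G b * K b := fun s hs => by
    rw [← setIntegral_eq_of_subset_of_forall_sdiff_eq_zero measurableSet_Ioc Ioo_subset_Ioc_self
        fun x hx => by rw [le_antisymm hx.1.2 (not_lt.1 fun h => hx.2 ⟨hx.1.1, h⟩), hDb],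
      integral_sub (hK.mul_const _).integrableOn (hG.mul_const _).integrableOn,
      integral_mul_const, integral_mul_const]
    have := measureReal_Iic_add_setIntegral_Ioc ν hs.2
    simp only [D, G] at this ⊢
    linear_combination -K b * this
  have hbdd : BddAbove (D '' Icc l b) := ⟨μ.real univ * ν.real univ, by
    rintro _ ⟨s, -, rfl⟩
    have : 0 ≤ G s * K b := by positivity
    have : K s * G b ≤ μ.real univ * ν.real univ :=
      mul_le_mul (measureReal_mono (subset_univ _)) (measureReal_mono (subset_univ _))
        measureReal_nonneg measureReal_nonneg
    simp only [D]
    linarith⟩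
  intro s hs
  have := nonpos_of_monotoneOn_add_setIntegral_Ioo (D := D) hε
    ((hK.mul_const _).sub (hG.mul_const _)).integrableOn hbdd hDb.le
    (fun x hx y hy hxy => by
      simp only [hΦ x hx, hΦ y hy]
      exact sub_le_sub_right (mul_le_mul_of_nonneg_left
        (monotoneOn_measureReal_Iic_add_setIntegral_Ioc h b hx.2 hy.2 hxy) measureReal_nonneg) _)
    s hs
  simp only [D] at this
  linarith

theorem measureReal_Iic_mul_le_of_reverseHazard_le [DenselyOrdered α]
    (h : reverseHazard ν ≤ reverseHazard μ) {t b : α} (htb : t ≤ b) (ht : μ (Iic t) ≠ 0) :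
    μ.real (Iic t) * ν.real (Iic b) ≤ ν.real (Iic t) * μ.real (Iic b) := by
  set R : α → α → Prop :=
    fun s u => μ.real (Iic s) * ν.real (Iic u) ≤ ν.real (Iic s) * μ.real (Iic u)
  have htrans : ∀ s u v, t ≤ u → R s u → R u v → R s v := by
    intro s u v htu hsu huv
    have hu : 0 < μ.real (Iic u) := ENNReal.toReal_pos
      (fun h0 => ht (measure_mono_null (Iic_subset_Iic.2 htu) h0)) (measure_ne_top _ _)
    have hs : 0 ≤ ν.real (Iic s) := measureReal_nonneg
    have hv : 0 ≤ ν.real (Iic v) := measureReal_nonneg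
    simp only [R] at *
    rcases (measureReal_nonneg : 0 ≤ ν.real (Iic u)).eq_or_lt with h0 | h0
    · rw [← h0, zero_mul] at huv
      have : ν.real (Iic v) = 0 := by nlinarith
      rw [this, mul_zero]
      positivity
    · refine le_of_mul_le_mul_right ?_ (mul_pos hu h0)
      nlinarith [mul_le_mul_of_nonneg_right hsu (mul_nonneg hu.le hv),
        mul_le_mul_of_nonneg_left huv (mul_nonneg hs hu.le)]
  have hlocal : ∀ l u, reverseHazard ν (Ioo l u) < 1 → ∀ s ∈ Icc l u, R s u :=
    fun l u hε => measureReal_Iic_mul_le_of_reverseHazard_Ioo_lt_one h hε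
  have hfin : ∀ x y, t ≤ x → reverseHazard ν (Ioo x y) ≠ ∞ := fun x y hx =>
    ne_top_of_le_ne_top (reverseHazard_Ioi_ne_top μ ht)
      ((h _).trans (measure_mono fun z hz => hx.trans_lt hz.1))
  set S := {s | s ∈ Icc t b ∧ R s b}
  have hbS : b ∈ S := ⟨⟨htb, le_rfl⟩, le_of_eq (mul_comm _ _)⟩
  have htc : t ≤ sInf S := le_sInf fun s hs => hs.1.1
  have hcS : sInf S ∈ S := by
    rcases (sInf_le hbS).eq_or_lt with hcb | hcb
    · exact hcb ▸ hbS
    have := nhdsGT_neBot_of_exists_gt ⟨b, hcb⟩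
    obtain ⟨b', hsmall, hb'⟩ := ((eventually_measure_Ioo_lt_nhdsGT hcb (hfin _ b htc) one_pos).and
      (Ioc_mem_nhdsGT hcb)).exists
    obtain ⟨s, hsS, hsb'⟩ := sInf_lt_iff.1 hb'.1
    have hcs : R (sInf S) s := hlocal _ s ((measure_mono (Ioo_subset_Ioo_right hsb'.le)).trans_lt
      hsmall) _ ⟨le_rfl, sInf_le hsS⟩
    exact ⟨⟨htc, hcb.le⟩, htrans _ s b hsS.1.1 hcs hsS.2⟩
  have hct : sInf S = t := by
    refine (htc.eq_or_lt.resolve_right fun htc' => ?_).symm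
    have := nhdsLT_neBot_of_exists_lt ⟨t, htc'⟩
    obtain ⟨l, hsmall, hl⟩ := ((eventually_measure_Ioo_lt_nhdsLT htc' (hfin t _ le_rfl) one_pos).and
      (Ico_mem_nhdsLT htc')).exists
    have hlS : l ∈ S := ⟨⟨hl.1, hl.2.le.trans hcS.1.2⟩,
      htrans l _ b htc (hlocal l _ hsmall l ⟨le_rfl, hl.2.le⟩) hcS.2⟩
    exact (sInf_le hlS).not_gt hl.2
  exact hct ▸ hcS.2

end Comparison

theorem measure_Iic_le_of_reverseHazard_le [DenselyOrdered α] {μ ν : Measure α}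
    [IsProbabilityMeasure μ] [IsProbabilityMeasure ν] (h : reverseHazard ν ≤ reverseHazard μ)
    (t : α) : μ (Iic t) ≤ ν (Iic t) := by
  rcases eq_or_ne (μ (Iic t)) 0 with ht | ht
  · simp [ht]
  have := measureReal_Iic_mul_le_of_reverseHazard_le h le_top ht
  simp only [Iic_top, probReal_univ, mul_one] at this
  exact (ENNReal.toReal_le_toReal (measure_ne_top _ _) (measure_ne_top _ _)).1 this

end ReverseHazard

theorem turnbull_M2_bound_general (FT FL FR : Measure ℝ≥0∞)
    [IsProbabilityMeasure FT] [IsProbabilityMeasure FL]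
    (H0 H1 H2 : Measure ℝ≥0∞)
    (hH2 : ∀ B, MeasurableSet B → H2 B = ∫⁻ t in B, FT (Iic t) ∂FL)
    (hH : ∀ t, (H0 + H1 + H2) (Iic t)
      = FL (Iic t) * FT (Iic t) + FR (Iic t) * FT (Ioi t))
    (F2 : Measure ℝ≥0∞) [IsProbabilityMeasure F2]
    (hF2 : ∀ B, MeasurableSet B →
      ∫⁻ s in B, (F2 (Iic s))⁻¹ ∂F2 = ∫⁻ s in B, ((H0 + H1 + H2) (Iic s))⁻¹ ∂H2) :
    (∀ B, MeasurableSet B →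
        ∫⁻ t in B, ((H0 + H1 + H2) (Iic t))⁻¹ ∂H2
          = ∫⁻ t in B, (FL (Iic t) * FT (Iic t)
              / (FL (Iic t) * FT (Iic t) + FR (Iic t) * FT (Ioi t)))
              * (FL (Iic t))⁻¹ ∂FL)
      ∧ (∀ B, MeasurableSet B →
          ∫⁻ t in B, ((H0 + H1 + H2) (Iic t))⁻¹ ∂H2 ≤ ∫⁻ t in B, (FL (Iic t))⁻¹ ∂FL)
      ∧ (∀ t, FL (Iic t) ≤ F2 (Iic t)) := by
  have hH2' : H2 = FL.withDensity fun t => FT (Iic t) :=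
    Measure.ext fun B hB => by rw [hH2 B hB, withDensity_apply _ hB]
  have hM2 : ∀ B, MeasurableSet B → ∫⁻ t in B, ((H0 + H1 + H2) (Iic t))⁻¹ ∂H2
      = ∫⁻ t in B, (FL (Iic t) * FT (Iic t)
          / (FL (Iic t) * FT (Iic t) + FR (Iic t) * FT (Ioi t))) * (FL (Iic t))⁻¹ ∂FL := by
    intro B hB
    simp_rw [hH]
    rw [hH2', setLIntegral_withDensity_eq_setLIntegral_mul_non_measurable _
      (measurable_measure_Iic FT) _ hB (ae_of_all _ fun _ => measure_lt_top _ _)]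
    refine setLIntegral_congr_fun_ae hB ((ae_measure_Iic_ne_zero FL).mono fun t ht _ => ?_)
    rw [Pi.mul_apply, div_eq_mul_inv, mul_right_comm, mul_right_comm (FL _),
      ENNReal.mul_inv_cancel ht (measure_ne_top _ _), one_mul]
  have hle : ∀ B, MeasurableSet B →
      ∫⁻ t in B, ((H0 + H1 + H2) (Iic t))⁻¹ ∂H2 ≤ ∫⁻ t in B, (FL (Iic t))⁻¹ ∂FL := fun B hB =>
    (hM2 B hB).trans_le <| lintegral_mono fun t =>
      mul_le_of_le_one_left' (ENNReal.div_le_of_le_mul (by rw [one_mul]; exact le_self_add))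
  refine ⟨hM2, hle, measure_Iic_le_of_reverseHazard_le (Measure.le_iff.2 fun B hB => ?_)⟩
  rw [reverseHazard, reverseHazard, withDensity_apply _ hB, withDensity_apply _ hB, hF2 B hB]
  exact hle B hB

/-- under Turnbull's doubly censored model, the predictable reverse hazard
measure `M₂⁻(dt) = H₂(dt)/H([0,t])` satisfies
`M₂⁻(dt) = [F_L([0,t]) F_T([0,t]) / (F_L([0,t]) F_T([0,t]) + F_R([0,t]) F_T((t,∞]))] M_L⁻(dt)`
with `M_L⁻(dt) = F_L(dt)/F_L([0,t])`; in particular `M₂⁻ ≤ M_L⁻` as measures and hence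
`F₂^I([0,t]) ≥ F_L([0,t])` for all `t`, where `F₂^I` is the distribution associated with
`M₂⁻` (i.e. the predictable reverse hazard of `F₂^I` is `M₂⁻`). -/
theorem turnbull_M2_bound (FT FL FR : Measure ℝ≥0∞)
    [IsProbabilityMeasure FT] [IsProbabilityMeasure FL] [IsProbabilityMeasure FR]
    (H0 H1 H2 : Measure ℝ≥0∞)
    (hH0 : ∀ B, MeasurableSet B → H0 B = ∫⁻ t in B, (FL (Iic t) - FR (Iic t)) ∂FT)
    (hH1 : ∀ B, MeasurableSet B → H1 B = ∫⁻ t in B, FT (Ioi t) ∂FR)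
    (hH2 : ∀ B, MeasurableSet B → H2 B = ∫⁻ t in B, FT (Iic t) ∂FL)
    (hH : ∀ t, (H0 + H1 + H2) (Iic t)
      = FL (Iic t) * FT (Iic t) + FR (Iic t) * FT (Ioi t))
    (F2 : Measure ℝ≥0∞) [IsProbabilityMeasure F2]
    (hF2 : ∀ B, MeasurableSet B →
      ∫⁻ s in B, (F2 (Iic s))⁻¹ ∂F2 = ∫⁻ s in B, ((H0 + H1 + H2) (Iic s))⁻¹ ∂H2) :
    (∀ B, MeasurableSet B →
        ∫⁻ t in B, ((H0 + H1 + H2) (Iic t))⁻¹ ∂H2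
          = ∫⁻ t in B, (FL (Iic t) * FT (Iic t)
              / (FL (Iic t) * FT (Iic t) + FR (Iic t) * FT (Ioi t)))
              * (FL (Iic t))⁻¹ ∂FL)
      ∧ (∀ B, MeasurableSet B →
          ∫⁻ t in B, ((H0 + H1 + H2) (Iic t))⁻¹ ∂H2 ≤ ∫⁻ t in B, (FL (Iic t))⁻¹ ∂FL)
      ∧ (∀ t, FL (Iic t) ≤ F2 (Iic t)) :=
  turnbull_M2_bound_general FT FL FR H0 H1 H2 hH2 hH F2 hF2
end

section
/- Let U = min_{1≤i≤n} Y_i be the minimum of n i.i.d. observations with distribution H, and suppose the measure μ(ds) = F₂^I(ds)/F₀₁^I([0,s]) satisfies μ((t₀₀, t]) → 0 as t ↓ t₀₀ and is finite on (t₀₀,∞]. Then √n · F₂^I((t₀₀, U)) → 0 in probability as n → ∞. -/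
open MeasureTheory Set ENNReal ProbabilityTheory Filter
open scoped Topology

/-!
Let `u` be the last point at which `√n · F₂^I((t₀₀, u)) ≤ ε`. On the event in question every
`Y_i` exceeds `u`, which has probability `H((u, ∞])ⁿ`. At `u` itself `F₂^I((t₀₀, u]) ≥ ε/√n`, and
`F₂^I((t₀₀, u]) ≤ F₀₁^I([0, u]) · μ((t₀₀, ∞])`, so
`H([0, u]) ≥ F₂^I([0, t₀₀]) · F₀₁^I([0, u]) ≥ b/√n` with `b = ε F₂^I([0, t₀₀]) / μ((t₀₀, ∞]) > 0`.
Hence the probability is at most `(1 - b/√n)ⁿ ≤ exp(-b√n) → 0`.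
-/

namespace ProbabilityTheory.iIndepFun

theorem measure_biInter_preimage_eq_pow {Ω α ι : Type*} [MeasurableSpace Ω] [MeasurableSpace α]
    {P : Measure Ω} {H : Measure α} {Y : ι → Ω → α} (hindep : iIndepFun Y P)
    (hY : ∀ i, Measurable (Y i)) (hlaw : ∀ i, P.map (Y i) = H) (S : Finset ι)
    {s : Set α} (hs : MeasurableSet s) :
    P (⋂ i ∈ S, Y i ⁻¹' s) = H s ^ S.card := by
  have hmarginal : ∀ i, P (Y i ⁻¹' s) = H s := fun i => by
    rw [← hlaw i, Measure.map_apply (hY i) hs]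
  simp only [hindep.meas_biInter fun i _ => ⟨s, hs, rfl⟩, hmarginal, Finset.prod_const]

end ProbabilityTheory.iIndepFun

section CrossingPoint

variable {α : Type*} [CompleteLinearOrder α] [MeasurableSpace α] (ν : Measure α) (t : α)
  (c : ℝ≥0∞)

/-- The paper's `u_n^λ`, with `c = λ/√n`. -/
def crossingPoint : α := sSup {s | ν (Ioo t s) ≤ c}

theorem le_crossingPoint : t ≤ crossingPoint ν t c :=
  le_sSup (by simp)

variable [TopologicalSpace α] [OrderTopology α] [FirstCountableTopology α]

theorem measure_Ioo_crossingPoint_le : ν (Ioo t (crossingPoint ν t c)) ≤ c := by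
  obtain ⟨f, hf_mono, hf_lim, hf_mem⟩ :=
    exists_seq_tendsto_sSup ⟨t, by simp⟩ (OrderTop.bddAbove {s | ν (Ioo t s) ≤ c})
  have hsub : Ioo t (crossingPoint ν t c) ⊆ ⋃ k, Ioo t (f k) := fun x hx =>
    have ⟨k, hk⟩ := (hf_lim.eventually_const_lt hx.2).exists
    mem_iUnion.2 ⟨k, hx.1, hk⟩
  calc ν (Ioo t (crossingPoint ν t c)) ≤ ν (⋃ k, Ioo t (f k)) := measure_mono hsub
    _ = ⨆ k, ν (Ioo t (f k)) :=
      Monotone.measure_iUnion fun _ _ hij => Ioo_subset_Ioo_right (hf_mono hij)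
    _ ≤ c := iSup_le hf_mem

variable {ν t c}

theorem crossingPoint_lt_of_lt_measure_Ioo {s : α} (h : c < ν (Ioo t s)) :
    crossingPoint ν t c < s := by
  by_contra! hs
  exact h.not_ge
    ((measure_mono (Ioo_subset_Ioo_right hs)).trans (measure_Ioo_crossingPoint_le ν t c))

theorem le_measure_Ioc_crossingPoint [DenselyOrdered α] [OpensMeasurableSpace α]
    [IsFiniteMeasure ν] (h : crossingPoint ν t c ≠ ⊤) :
    c ≤ ν (Ioc t (crossingPoint ν t c)) := by
  set u := crossingPoint ν t c
  have hlim := tendsto_measure_biInter_gt (μ := ν) (s := fun r => Ioo t r) (a := u)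
    (fun _ _ => measurableSet_Ioo.nullMeasurableSet)
    (fun _ _ _ hij => Ioo_subset_Ioo_right hij) ⟨⊤, h.lt_top, measure_ne_top _ _⟩
  have hInter : ⋂ r > u, Ioo t r = Ioc t u := by
    ext x
    simp only [mem_iInter, mem_Ioo, mem_Ioc]
    refine ⟨fun hx => ⟨(hx ⊤ h.lt_top).1, le_of_forall_gt fun r hr => (hx r hr).2⟩,
      fun hx r hr => ⟨hx.1, hx.2.trans_lt hr⟩⟩
  have : (𝓝[>] u).NeBot := nhdsGT_neBot_of_exists_gt ⟨⊤, h.lt_top⟩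
  rw [hInter] at hlim
  exact ge_of_tendsto hlim (eventually_nhdsWithin_of_forall fun r hr =>
    (not_le.1 fun hle => (mem_Ioi.1 hr).not_ge (le_sSup hle)).le)

end CrossingPoint

theorem measure_le_measure_Iic_mul_setLIntegral_inv {α : Type*} [Preorder α] [MeasurableSpace α]
    (F2 F01 : Measure α) [IsFiniteMeasure F01] {B : Set α} {u : α} (hB : MeasurableSet B)
    (hBu : B ⊆ Iic u) (hfin : ∫⁻ s in B, (F01 (Iic s))⁻¹ ∂F2 ≠ ∞) :
    F2 B ≤ F01 (Iic u) * ∫⁻ s in B, (F01 (Iic s))⁻¹ ∂F2 := by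
  rcases eq_or_ne (F01 (Iic u)) 0 with hu | hu
  · have hinv : ∀ s ∈ B, (F01 (Iic s))⁻¹ = ∞ := fun s hs => by
      rw [measure_mono_null (Iic_subset_Iic.2 (hBu hs)) hu, ENNReal.inv_zero]
    rw [setLIntegral_congr_fun hB hinv, setLIntegral_const] at hfin
    have hB0 : F2 B = 0 := not_not.1 fun h0 => hfin (ENNReal.top_mul h0)
    simp [hB0]
  · rw [← lintegral_const_mul' _ _ (measure_ne_top _ _), ← setLIntegral_one]
    refine setLIntegral_mono' hB fun s hs => ?_
    rw [← div_eq_mul_inv, ENNReal.le_div_iff_mul_le (.inr hu) (.inl (measure_ne_top _ _)), one_mul]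
    exact measure_mono (Iic_subset_Iic.2 (hBu hs))

section Factorization

variable {α : Type*} [CompleteLinearOrder α] [TopologicalSpace α] [OrderTopology α]
  [DenselyOrdered α] [FirstCountableTopology α] [MeasurableSpace α] [OpensMeasurableSpace α]
  {H F2 F01 : Measure α} [IsFiniteMeasure F2] [IsFiniteMeasure F01] {t : α} {c : ℝ≥0∞}

theorem mul_measure_Iic_le_measure_Iic_crossingPoint_mul
    (hfac : ∀ s, H (Iic s) = F2 (Iic s) * F01 (Iic s))
    (hfin : ∫⁻ s in Ioi t, (F01 (Iic s))⁻¹ ∂F2 ≠ ∞) (hu : crossingPoint F2 t c ≠ ⊤) :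
    c * F2 (Iic t) ≤ H (Iic (crossingPoint F2 t c)) * ∫⁻ s in Ioi t, (F01 (Iic s))⁻¹ ∂F2 := by
  set u := crossingPoint F2 t c
  set M := ∫⁻ s in Ioi t, (F01 (Iic s))⁻¹ ∂F2
  have hIoc : ∫⁻ s in Ioc t u, (F01 (Iic s))⁻¹ ∂F2 ≤ M :=
    lintegral_mono_set Ioc_subset_Ioi_self
  have hc : c ≤ F01 (Iic u) * M := calc
    c ≤ F2 (Ioc t u) := le_measure_Ioc_crossingPoint hu
    _ ≤ F01 (Iic u) * ∫⁻ s in Ioc t u, (F01 (Iic s))⁻¹ ∂F2 :=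
      measure_le_measure_Iic_mul_setLIntegral_inv F2 F01 measurableSet_Ioc Ioc_subset_Iic_self
        (ne_top_of_le_ne_top hfin hIoc)
    _ ≤ F01 (Iic u) * M := by gcongr
  calc c * F2 (Iic t) ≤ F01 (Iic u) * M * F2 (Iic u) :=
        mul_le_mul' hc (measure_mono (Iic_subset_Iic.2 (le_crossingPoint F2 t c)))
    _ = H (Iic u) * M := by rw [hfac]; ring

theorem measure_Ioi_crossingPoint_le [IsProbabilityMeasure H]
    (hfac : ∀ s, H (Iic s) = F2 (Iic s) * F01 (Iic s))
    (hfin : ∫⁻ s in Ioi t, (F01 (Iic s))⁻¹ ∂F2 ≠ ∞) :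
    H (Ioi (crossingPoint F2 t c))
      ≤ 1 - c * F2 (Iic t) / ∫⁻ s in Ioi t, (F01 (Iic s))⁻¹ ∂F2 := by
  rcases eq_or_ne (crossingPoint F2 t c) ⊤ with hu | hu
  · simp [hu]
  · rw [← compl_Iic, prob_compl_eq_one_sub measurableSet_Iic]
    exact tsub_le_tsub_left
      (ENNReal.div_le_of_le_mul (mul_measure_Iic_le_measure_Iic_crossingPoint_mul hfac hfin hu)) 1

end Factorization

theorem ENNReal.one_sub_ofReal_le_ofReal_exp_neg {x : ℝ} (hx : 0 ≤ x) :
    1 - ENNReal.ofReal x ≤ ENNReal.ofReal (Real.exp (-x)) := by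
  rw [← ENNReal.ofReal_one, ← ENNReal.ofReal_sub _ hx]
  exact ENNReal.ofReal_le_ofReal (by linarith [Real.add_one_le_exp (-x)])

theorem tendsto_pow_one_sub_div_sqrt {b : ℝ≥0∞} (hb : b ≠ 0) :
    Tendsto (fun n : ℕ => (1 - b / ENNReal.ofReal √n) ^ n) atTop (𝓝 0) := by
  obtain ⟨β, -, hβ_pos, hβb⟩ := ENNReal.lt_iff_exists_real_btwn.1 (pos_iff_ne_zero.2 hb)
  have hβ : 0 < β := ENNReal.ofReal_pos.1 hβ_pos
  have hexp : Tendsto (fun n : ℕ => ENNReal.ofReal (Real.exp (-(β * √n)))) atTop (𝓝 0) := by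
    have := (Real.tendsto_sqrt_atTop.comp tendsto_natCast_atTop_atTop).const_mul_atTop hβ
    simpa [Function.comp_def] using (ENNReal.continuous_ofReal.tendsto 0).comp
      (Real.tendsto_exp_neg_atTop_nhds_zero.comp this)
  refine tendsto_of_tendsto_of_tendsto_of_le_of_le' tendsto_const_nhds hexp
    (.of_forall fun _ => zero_le) ?_
  filter_upwards [eventually_gt_atTop 0] with n hn
  have hsqrt : 0 < √(n : ℝ) := Real.sqrt_pos.2 (by exact_mod_cast hn)
  calc (1 - b / ENNReal.ofReal √n) ^ n ≤ (1 - ENNReal.ofReal (β / √n)) ^ n := by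
        rw [ENNReal.ofReal_div_of_pos hsqrt]
        gcongr
    _ ≤ ENNReal.ofReal (Real.exp (-(β / √n))) ^ n := by
        gcongr
        exact ENNReal.one_sub_ofReal_le_ofReal_exp_neg (by positivity)
    _ = ENNReal.ofReal (Real.exp (-(β * √n))) := by
        rw [← ENNReal.ofReal_pow (Real.exp_nonneg _), ← Real.exp_nat_mul, mul_neg,
          ← mul_div_assoc, mul_comm, mul_div_assoc, Real.div_sqrt]

theorem sqrt_n_F2_min_to_zero_general {Ω : Type*} [MeasurableSpace Ω]
    (P : Measure Ω) [IsProbabilityMeasure P]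
    (H F2 F01 : Measure ℝ≥0∞)
    [IsProbabilityMeasure H] [IsProbabilityMeasure F2] [IsProbabilityMeasure F01]
    (hfac : ∀ t, H (Iic t) = F2 (Iic t) * F01 (Iic t))
    (t00 : ℝ≥0∞) (hF2pos : 0 < F2 (Iic t00))
    (μ : Measure ℝ≥0∞)
    (hμ : ∀ B, MeasurableSet B → μ B = ∫⁻ s in B, (F01 (Iic s))⁻¹ ∂F2)
    (hμfin : μ (Ioi t00) < ∞)
    (Y : ℕ → Ω → ℝ≥0∞) (hY : ∀ i, Measurable (Y i))
    (hiid : ∀ i, P.map (Y i) = H)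
    (hindep : iIndepFun Y P) :
    ∀ ε : ℝ≥0∞, 0 < ε →
      Tendsto (fun n : ℕ =>
          P {ω | ε < ENNReal.ofReal (Real.sqrt n)
              * F2 (Ioo t00 (⨅ i ∈ Finset.range n, Y i ω))})
        atTop (nhds 0) := by
  intro ε hε
  have hμ_Ioi := hμ (Ioi t00) measurableSet_Ioi
  have hb : ε * F2 (Iic t00) / μ (Ioi t00) ≠ 0 :=
    ENNReal.div_ne_zero.2 ⟨mul_ne_zero hε.ne' hF2pos.ne', hμfin.ne⟩
  refine tendsto_of_tendsto_of_tendsto_of_le_of_le tendsto_const_nhds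
    (tendsto_pow_one_sub_div_sqrt hb) (fun _ => zero_le) fun n => ?_
  set u := crossingPoint F2 t00 (ε / ENNReal.ofReal √n)
  calc _ ≤ P (⋂ i ∈ Finset.range n, Y i ⁻¹' Ioi u) :=
        measure_mono fun ω hω => mem_iInter₂.2 fun i hi =>
          (crossingPoint_lt_of_lt_measure_Ioo (ENNReal.div_lt_of_lt_mul' hω)).trans_le
            (biInf_le _ hi)
    _ = H (Ioi u) ^ n := by
        rw [hindep.measure_biInter_preimage_eq_pow hY hiid _ measurableSet_Ioi,
          Finset.card_range]
    _ ≤ _ := by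
        gcongr
        refine (measure_Ioi_crossingPoint_le hfac (hμ_Ioi ▸ hμfin.ne)).trans_eq ?_
        simp only [← hμ_Ioi, div_eq_mul_inv]
        congr 1
        ring

/-- let `U = min_{1≤i≤n} Y_i` be the minimum of `n` i.i.d. observations with
distribution `H`, where `H([0,t]) = F₂^I([0,t]) F₀₁^I([0,t])`, `F₂^I([0,t₀₀]) > 0`, and the
measure `μ(ds) = F₂^I(ds)/F₀₁^I([0,s])` is finite on `(t₀₀,∞]` with `μ((t₀₀,t]) → 0` as
`t ↓ t₀₀`. Then `√n · F₂^I((t₀₀, U)) → 0` in probability as `n → ∞`. -/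
theorem sqrt_n_F2_min_to_zero {Ω : Type*} [MeasurableSpace Ω]
    (P : Measure Ω) [IsProbabilityMeasure P]
    (H F2 F01 : Measure ℝ≥0∞)
    [IsProbabilityMeasure H] [IsProbabilityMeasure F2] [IsProbabilityMeasure F01]
    (hfac : ∀ t, H (Iic t) = F2 (Iic t) * F01 (Iic t))
    (t00 : ℝ≥0∞) (hF2pos : 0 < F2 (Iic t00))
    (μ : Measure ℝ≥0∞)
    (hμ : ∀ B, MeasurableSet B → μ B = ∫⁻ s in B, (F01 (Iic s))⁻¹ ∂F2)
    (hμfin : μ (Ioi t00) < ∞)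
    (hμlim : Tendsto (fun t => μ (Ioc t00 t)) (nhdsWithin t00 (Ioi t00)) (nhds 0))
    (Y : ℕ → Ω → ℝ≥0∞) (hY : ∀ i, Measurable (Y i))
    (hiid : ∀ i, P.map (Y i) = H)
    (hindep : iIndepFun Y P) :
    ∀ ε : ℝ≥0∞, 0 < ε →
      Tendsto (fun n : ℕ =>
          P {ω | ε < ENNReal.ofReal (Real.sqrt n)
              * F2 (Ioo t00 (⨅ i ∈ Finset.range n, Y i ω))})
        atTop (nhds 0) :=
  sqrt_n_F2_min_to_zero_general P H F2 F01 hfac t00 hF2pos μ hμ hμfin Y hY hiid hindep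
end

section
/- Monotonicity of product-integration for reverse hazards: if M₁⁻ and M₂⁻ are two predictable reverse hazard measures on [0,∞] with M₁⁻(B) ≤ M₂⁻(B) for all Borel B and atoms at most 1, then the associated distributions satisfy F₁([0,t]) ≥ F₂([0,t]) for all t, where F_k([0,t]) = ∏_{(t,∞]}(1 - M_k⁻(ds)). -/
open MeasureTheory Set ENNReal Filter Topology

/-!
Write `a s = M₁({s})` and `b s = M₂({s})` for `s > t`, so `a ≤ b`. Factor by factor,
`1 - b ≤ (1 - a) e^{-(b - a)}`, hence `∏ (1 - b) ≤ ∏ (1 - a) · e^{-∑ (b - a)}`. The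
excess `∑ (b - a)` of jump mass of `M₂` over `M₁` together with the continuous mass
`M₂ᶜ((t,∞])` is at least `M₁ᶜ((t,∞])`, because `M₁((t,∞]) ≤ M₂((t,∞])`; so the extra
exponential factor on the `M₂` side is at most the continuous factor on the `M₁` side.
-/

/-- The continuous factor `exp(-m)` of the product-integral, valued in `ℝ≥0∞`. -/
noncomputable def contFactor (m : ℝ≥0∞) : ℝ≥0∞ :=
  if m = ∞ then 0 else ENNReal.ofReal (Real.exp (-m.toReal))

/-- The reverse product-integral `∏_{(t,∞]} (1 - μ(ds))` of a reverse hazard measure with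
continuous part `μc`: `exp(-μc((t,∞])) ∏_{s > t, μ({s})>0} (1 - μ({s}))`. -/
noncomputable def revProdIntegral (μ μc : Measure ℝ≥0∞) (t : ℝ≥0∞) : ℝ≥0∞ :=
  contFactor (μc (Ioi t)) * ∏' s : ↥(Ioi t ∩ {s | μ {s} ≠ 0}), (1 - μ {(s : ℝ≥0∞)})

lemma contFactor_eq_exp (m : ℝ≥0∞) : contFactor m = EReal.exp (-(m : EReal)) := by
  rcases eq_or_ne m ∞ with rfl | hm
  · simp [contFactor]
  · rw [contFactor, if_neg hm, ← ENNReal.ofReal_toReal hm, EReal.coe_ennreal_ofReal,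
      max_eq_left ENNReal.toReal_nonneg, ← EReal.coe_neg, EReal.exp_coe, ENNReal.toReal_ofReal
      ENNReal.toReal_nonneg]

lemma contFactor_add (x y : ℝ≥0∞) : contFactor (x + y) = contFactor x * contFactor y := by
  simp only [contFactor_eq_exp, EReal.coe_ennreal_add, ← EReal.exp_add]
  rw [EReal.neg_add (Or.inl (EReal.coe_ennreal_ne_bot x)) (Or.inr (EReal.coe_ennreal_ne_bot y)),
    sub_eq_add_neg]

lemma contFactor_sum {ι : Type*} (s : Finset ι) (f : ι → ℝ≥0∞) :
    contFactor (∑ i ∈ s, f i) = ∏ i ∈ s, contFactor (f i) := by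
  classical
  induction s using Finset.induction_on with
  | empty => simp [contFactor]
  | insert i s hi ih => rw [Finset.sum_insert hi, Finset.prod_insert hi, contFactor_add, ih]

lemma contFactor_antitone : Antitone contFactor := fun x y hxy => by
  simpa only [contFactor_eq_exp, EReal.exp_le_exp_iff, EReal.neg_le_neg_iff,
    EReal.coe_ennreal_le_coe_ennreal_iff]

lemma continuous_contFactor : Continuous contFactor := by
  simp only [funext contFactor_eq_exp]
  exact ENNReal.continuous_exp.comp (continuous_neg.comp continuous_coe_ennreal_ereal)

lemma contFactor_ne_top (m : ℝ≥0∞) : contFactor m ≠ ∞ := by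
  unfold contFactor; split_ifs <;> simp

lemma one_sub_le_mul_contFactor {a b : ℝ≥0∞} (hab : a ≤ b) :
    1 - b ≤ (1 - a) * contFactor (b - a) := by
  rcases le_or_gt 1 b with hb | hb
  · simp [tsub_eq_zero_of_le hb]
  obtain ⟨y, hy, rfl⟩ : ∃ y, 0 ≤ y ∧ b = ENNReal.ofReal y :=
    ⟨b.toReal, ENNReal.toReal_nonneg, (ENNReal.ofReal_toReal hb.ne_top).symm⟩
  obtain ⟨x, hx, rfl⟩ : ∃ x, 0 ≤ x ∧ a = ENNReal.ofReal x :=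
    ⟨a.toReal, ENNReal.toReal_nonneg, (ENNReal.ofReal_toReal (hab.trans_lt hb).ne_top).symm⟩
  have hxy : x ≤ y := (ENNReal.ofReal_le_ofReal_iff hy).1 hab
  have hy1 : y < 1 := by simpa using hb
  rw [← ENNReal.ofReal_sub _ hx, contFactor, if_neg ENNReal.ofReal_ne_top,
    ENNReal.toReal_ofReal (by linarith), ← ENNReal.ofReal_one, ← ENNReal.ofReal_sub _ hy,
    ← ENNReal.ofReal_sub _ hx, ← ENNReal.ofReal_mul (by linarith)]
  refine ENNReal.ofReal_le_ofReal ?_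
  -- `(1 - x) e^{x - y} ≥ (1 - x)(1 + x - y) = 1 - y + x (y - x)`
  nlinarith [Real.add_one_le_exp (-(y - x)), mul_nonneg hx (sub_nonneg.2 hxy)]

section OneSubProd

variable {ι : Type*} {a b : ι → ℝ≥0∞}

lemma prod_one_sub_le_mul_contFactor (hab : a ≤ b) (s : Finset ι) :
    ∏ i ∈ s, (1 - b i) ≤ (∏ i ∈ s, (1 - a i)) * contFactor (∑ i ∈ s, (b i - a i)) := by
  rw [contFactor_sum, ← Finset.prod_mul_distrib]
  exact Finset.prod_le_prod' fun i _ => one_sub_le_mul_contFactor (hab i)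

lemma hasProd_one_sub (f : ι → ℝ≥0∞) : HasProd (fun i => 1 - f i) (∏' i, (1 - f i)) :=
  (ENNReal.multipliable_of_le_one fun _ => tsub_le_self).hasProd

lemma tprod_one_sub_le_mul_contFactor (hab : a ≤ b) :
    ∏' i, (1 - b i) ≤ (∏' i, (1 - a i)) * contFactor (∑' i, (b i - a i)) := by
  have hexcess : Tendsto (fun s : Finset ι => contFactor (∑ i ∈ s, (b i - a i))) atTop
      (𝓝 (contFactor (∑' i, (b i - a i)))) :=
    (continuous_contFactor.tendsto _).comp ENNReal.summable.hasSum
  have hprod_ne_top : ∏' i, (1 - a i) ≠ ∞ :=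
    ne_top_of_le_ne_top one_ne_top (tprod_le_one fun _ => tsub_le_self)
  exact le_of_tendsto_of_tendsto' (hasProd_one_sub b)
    (ENNReal.Tendsto.mul (hasProd_one_sub a) (Or.inr (contFactor_ne_top _)) hexcess
      (Or.inr hprod_ne_top))
    (prod_one_sub_le_mul_contFactor hab)

lemma tprod_one_sub_eq_zero_of_tsum_eq_top (hb : ∑' i, b i = ∞) : ∏' i, (1 - b i) = 0 := by
  simpa [hb, contFactor] using tprod_one_sub_le_mul_contFactor (a := 0) (b := b) zero_le

lemma contFactor_mul_tprod_one_sub_le {m₁ m₂ : ℝ≥0∞} (hab : a ≤ b)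
    (hmass : m₁ + ∑' i, a i ≤ m₂ + ∑' i, b i) :
    contFactor m₂ * ∏' i, (1 - b i) ≤ contFactor m₁ * ∏' i, (1 - a i) := by
  rcases eq_or_ne (∑' i, a i) ∞ with ha | ha
  · rw [tprod_one_sub_eq_zero_of_tsum_eq_top (top_unique (ha ▸ ENNReal.tsum_le_tsum hab)),
      mul_zero]
    exact zero_le
  have hm : m₁ ≤ m₂ + ∑' i, (b i - a i) := by
    rwa [← ENNReal.add_le_add_iff_right ha, add_assoc, ← ENNReal.tsum_add,
      tsum_congr fun i => tsub_add_cancel_of_le (hab i)]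
  calc contFactor m₂ * ∏' i, (1 - b i)
      ≤ contFactor m₂ * ((∏' i, (1 - a i)) * contFactor (∑' i, (b i - a i))) :=
        mul_le_mul_of_nonneg_left (tprod_one_sub_le_mul_contFactor hab) zero_le
    _ = contFactor (m₂ + ∑' i, (b i - a i)) * ∏' i, (1 - a i) := by
        rw [contFactor_add]; ring
    _ ≤ contFactor m₁ * ∏' i, (1 - a i) :=
        mul_le_mul_of_nonneg_right (contFactor_antitone hm) zero_le

end OneSubProd

section Reindex

variable {α : Type*} (B : Set α) (f : α → ℝ≥0∞)

lemma tsum_inter_support_eq_tsum_indicator :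
    ∑' s : ↥(B ∩ {s | f s ≠ 0}), f s = ∑' s, B.indicator f s := by
  rw [← tsum_subtype_eq_of_support_subset (support_indicator (s := B) (f := f)).subset]
  exact tsum_congr fun s => (indicator_of_mem s.2.1 f).symm

lemma tprod_one_sub_inter_support_eq_tprod_indicator :
    ∏' s : ↥(B ∩ {s | f s ≠ 0}), (1 - f s) = ∏' s, (1 - B.indicator f s) := by
  have hsupp : Function.mulSupport (fun s => 1 - B.indicator f s) ⊆ B ∩ {s | f s ≠ 0} := by
    intro s hs
    have hne : s ∈ Function.support (B.indicator f) := fun h => hs (by simp [h])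
    rwa [support_indicator] at hne
  rw [← tprod_subtype_eq_of_mulSupport_subset hsupp]
  exact tprod_congr fun s => by rw [indicator_of_mem s.2.1 f]

end Reindex

theorem revProdIntegral_antitone_general (M1 M2 M1c M2c : Measure ℝ≥0∞)
    (hdec1 : ∀ B, MeasurableSet B →
      M1 B = M1c B + ∑' s : ↥(B ∩ {s | M1 {s} ≠ 0}), M1 {(s : ℝ≥0∞)})
    (hdec2 : ∀ B, MeasurableSet B →
      M2 B = M2c B + ∑' s : ↥(B ∩ {s | M2 {s} ≠ 0}), M2 {(s : ℝ≥0∞)})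
    (hle : ∀ B, MeasurableSet B → M1 B ≤ M2 B) :
    ∀ t, revProdIntegral M2 M2c t ≤ revProdIntegral M1 M1c t := by
  intro t
  have hatoms : (Ioi t).indicator (fun s => M1 {s}) ≤ (Ioi t).indicator (fun s => M2 {s}) :=
    fun s => indicator_le_indicator (hle _ (measurableSet_singleton s))
  have hmass := hle _ (measurableSet_Ioi (a := t))
  rw [hdec1 _ measurableSet_Ioi, hdec2 _ measurableSet_Ioi,
    tsum_inter_support_eq_tsum_indicator, tsum_inter_support_eq_tsum_indicator] at hmass
  simp only [revProdIntegral, tprod_one_sub_inter_support_eq_tprod_indicator]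
  exact contFactor_mul_tprod_one_sub_le hatoms hmass

/-- monotonicity of product-integration for reverse hazards: if `M₁⁻ ≤ M₂⁻`
as measures, with atoms at most `1`, then the associated distributions satisfy
`F₁([0,t]) ≥ F₂([0,t])` for all `t`, where `F_k([0,t]) = ∏_{(t,∞]}(1 - M_k⁻(ds))`. -/
theorem revProdIntegral_antitone (M1 M2 M1c M2c : Measure ℝ≥0∞)
    (hatom1 : ∀ s, M1 {s} ≤ 1) (hatom2 : ∀ s, M2 {s} ≤ 1)
    (hc1 : ∀ s, M1c {s} = 0) (hc2 : ∀ s, M2c {s} = 0)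
    (hdec1 : ∀ B, MeasurableSet B →
      M1 B = M1c B + ∑' s : ↥(B ∩ {s | M1 {s} ≠ 0}), M1 {(s : ℝ≥0∞)})
    (hdec2 : ∀ B, MeasurableSet B →
      M2 B = M2c B + ∑' s : ↥(B ∩ {s | M2 {s} ≠ 0}), M2 {(s : ℝ≥0∞)})
    (hle : ∀ B, MeasurableSet B → M1 B ≤ M2 B) :
    ∀ t, revProdIntegral M2 M2c t ≤ revProdIntegral M1 M1c t :=
  revProdIntegral_antitone_general M1 M2 M1c M2c hdec1 hdec2 hle
end
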